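/- For every positive integer n and every integer p, the sum over k from 0 to n of (-1)^{(p-1)(n-k)} * C(n+k, n-k) * L_p^{2k} equals F_{(2n+1)p} / F_p, provided p ≠ 0. -/

import Mathlib

/-
With `x = φ ^ p` and `y = ψ ^ p` we have `x + y = L_p`, `x * y = (-1) ^ p` and, by Binet,
`x ^ m - y ^ m = √5 F_{mp}`. The left-hand side is the classical binomial closed form of the Lucas
sequence `U_{2n+1}(P, Q)` with `P = x + y`, `Q = x y`, and `(x - y) U_m = x ^ m - y ^ m` is a
polynomial identity, proved from the recurrence `U_{m+2} = P U_{m+1} - Q U_m` and Pascal's rule.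
-/

open Finset

/-- Fibonacci numbers extended to all integers: `F_{-n} = (-1)^{n-1} F_n`. -/
def fibZ (n : ℤ) : ℤ :=
  if 0 ≤ n then Nat.fib n.toNat else (-1) ^ (n.natAbs + 1) * Nat.fib n.natAbs

/-- Lucas numbers extended to all integers: `L_n = F_{n-1} + F_{n+1}`. -/
def lucasZ (n : ℤ) : ℤ := fibZ (n - 1) + fibZ (n + 1)

theorem fibZ_eq_intFib (n : ℤ) : fibZ n = Int.fib n := by
  obtain ⟨m, rfl | rfl⟩ := n.eq_nat_or_neg
  · simp [fibZ]
  · rcases m.eq_zero_or_pos with rfl | hm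
    · simp [fibZ]
    · rw [fibZ, if_neg (by omega), Int.natAbs_neg, Int.natAbs_natCast, Int.fib_neg_natCast]

section Binet

open Real goldenRatio

theorem coe_fibZ_mul_sqrt_five (n : ℤ) : (fibZ n : ℝ) * √5 = φ ^ n - ψ ^ n := by
  rw [fibZ_eq_intFib, coe_intFib_eq, div_mul_cancel₀ _ (by positivity)]

theorem coe_lucasZ_eq (n : ℤ) : (lucasZ n : ℝ) = φ ^ n + ψ ^ n := by
  have h : (lucasZ n : ℝ) * √5 = (φ ^ n + ψ ^ n) * √5 := by
    rw [lucasZ, Int.cast_add, add_mul, coe_fibZ_mul_sqrt_five, coe_fibZ_mul_sqrt_five,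
      zpow_sub_one₀ goldenRatio_ne_zero, zpow_sub_one₀ goldenConj_ne_zero,
      zpow_add_one₀ goldenRatio_ne_zero, zpow_add_one₀ goldenConj_ne_zero,
      inv_goldenRatio, inv_goldenConj, ← goldenRatio_sub_goldenConj]
    ring
  exact mul_right_cancel₀ (by positivity) h

end Binet

theorem choose_succ_mul_pow_sub {S : Type*} [CommSemiring S] (P : S) (i j : ℕ) :
    (i.choose (j + 1) : S) * P ^ (i - j) = P * ((i.choose (j + 1) : S) * P ^ (i - (j + 1))) := by
  rcases lt_or_ge j i with h | h
  · rw [show i - j = i - (j + 1) + 1 by omega, pow_succ]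
    ring
  · simp [Nat.choose_eq_zero_of_lt (Nat.lt_succ_of_le h)]

section LucasSequence

variable {R : Type*} [CommRing R]

/-- The Lucas sequence `U_{m+1}(P, Q)`. The summands with `j > i` vanish, so the truncated
exponent `i - j` is harmless. -/
def lucasSum (P Q : R) (m : ℕ) : R :=
  ∑ ij ∈ antidiagonal m, (ij.1.choose ij.2 : R) * P ^ (ij.1 - ij.2) * (-Q) ^ ij.2

theorem lucasSum_add_two (P Q : R) (m : ℕ) :
    lucasSum P Q (m + 2) = P * lucasSum P Q (m + 1) - Q * lucasSum P Q m := by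
  have pascal (i j : ℕ) : ((i + 1).choose (j + 1) : R) * P ^ (i + 1 - (j + 1)) * (-Q) ^ (j + 1) =
      -Q * ((i.choose j : R) * P ^ (i - j) * (-Q) ^ j) +
        P * ((i.choose (j + 1) : R) * P ^ (i - (j + 1)) * (-Q) ^ (j + 1)) := by
    rw [Nat.choose_succ_succ, Nat.cast_add, Nat.add_sub_add_right, pow_succ]
    linear_combination (-Q) ^ (j + 1) * choose_succ_mul_pow_sub P i j
  rw [lucasSum, lucasSum, lucasSum, Nat.sum_antidiagonal_succ', Nat.sum_antidiagonal_succ,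
    Nat.sum_antidiagonal_succ']
  simp only [pascal, sum_add_distrib, ← mul_sum, Nat.choose_zero_succ, Nat.choose_zero_right,
    Nat.sub_zero]
  ring

theorem sub_mul_lucasSum (x y : R) (m : ℕ) :
    (x - y) * lucasSum (x + y) (x * y) m = x ^ (m + 1) - y ^ (m + 1) := by
  induction m using Nat.twoStepInduction with
  | zero => simp [lucasSum]
  | one =>
    simp [lucasSum, Nat.antidiagonal_succ]
    ring
  | more m ih₀ ih₁ =>
    rw [lucasSum_add_two]
    linear_combination (x + y) * ih₁ - x * y * ih₀

theorem lucasSum_two_mul (P Q : R) (n : ℕ) :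
    lucasSum P Q (2 * n) =
      ∑ k ∈ range (n + 1), (-Q) ^ (n - k) * ((n + k).choose (n - k) : R) * P ^ (2 * k) := by
  rw [lucasSum, Nat.sum_antidiagonal_eq_sum_range_succ_mk, Nat.succ_eq_add_one,
    show 2 * n + 1 = n + (n + 1) by ring, sum_range_add]
  have lower : ∀ i ∈ range n,
      (i.choose (2 * n - i) : R) * P ^ (i - (2 * n - i)) * (-Q) ^ (2 * n - i) = 0 := by
    intro i hi
    rw [Nat.choose_eq_zero_of_lt (by simp at hi; omega), Nat.cast_zero, zero_mul, zero_mul]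
  rw [sum_eq_zero lower, zero_add]
  refine sum_congr rfl fun k hk => ?_
  have hk : k ≤ n := Nat.lt_succ_iff.mp (mem_range.mp hk)
  rw [show 2 * n - (n + k) = n - k by omega, show n + k - (n - k) = 2 * k by omega]
  ring

end LucasSequence

open Real goldenRatio in
theorem stmt_19_general (n : ℕ) (p : ℤ) (hp : p ≠ 0) :
    ∑ k ∈ range (n + 1), (-1 : ℚ) ^ ((p - 1) * ((n : ℤ) - k)) *
      (Nat.choose (n + k) (n - k)) * (lucasZ p : ℚ) ^ (2 * k) =
    (fibZ ((2 * n + 1) * p) : ℚ) / (fibZ p : ℚ) := by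
  have hF : (fibZ p : ℝ) ≠ 0 := by simpa [fibZ_eq_intFib] using hp
  have sign (k : ℕ) (hk : k ≤ n) :
      (-1 : ℝ) ^ ((p - 1) * ((n : ℤ) - k)) = (-(φ ^ p * ψ ^ p)) ^ (n - k) := by
    rw [← mul_zpow, goldenRatio_mul_goldenConj, ← Nat.cast_sub hk, zpow_mul, zpow_natCast,
      zpow_sub_one₀ (by norm_num)]
    ring
  have key := sub_mul_lucasSum (φ ^ p) (ψ ^ p) (2 * n)
  rw [← coe_fibZ_mul_sqrt_five, ← coe_lucasZ_eq, ← zpow_natCast, ← zpow_natCast, ← zpow_mul,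
    ← zpow_mul, mul_comm p, ← coe_fibZ_mul_sqrt_five, lucasSum_two_mul] at key
  push_cast at key
  apply Rat.cast_injective (α := ℝ)
  push_cast
  rw [eq_div_iff hF]
  apply mul_right_cancel₀ (by positivity : (√5 : ℝ) ≠ 0)
  rw [← key, sum_congr rfl fun k hk => by rw [sign k (Nat.lt_succ_iff.mp (mem_range.mp hk))]]
  ring

theorem stmt_19 (n : ℕ) (hn : 0 < n) (p : ℤ) (hp : p ≠ 0) :
    ∑ k ∈ range (n + 1), (-1 : ℚ) ^ ((p - 1) * ((n : ℤ) - k)) *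
      (Nat.choose (n + k) (n - k)) * (lucasZ p : ℚ) ^ (2 * k) =
    (fibZ ((2 * n + 1) * p) : ℚ) / (fibZ p : ℚ) :=
  stmt_19_general n p hp
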